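/- Let (X, S) be a subshift over a finite alphabet A and ζ the partition of X into 1-cylinders. If X is (K+1)-power free for some real K > 0 (i.e. the only word u with u^{K+1} ∈ L(X) is the empty word), then the lower local rate of Poincaré recurrence satisfies R̲_ζ(x) ≥ 1/K for every x ∈ X. -/
import Mathlib


open Filter Set
open scoped ENNReal

variable {A : Type*}

/-- The two-sided shift on `A^ℤ`. -/
def shiftZ (x : ℤ → A) : ℤ → A := fun n => x (n + 1)

/-- The finite word `u` occurs in the sequence `x` at position `i`. -/
def OccursAt (u : List A) (x : ℤ → A) (i : ℤ) : Prop :=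
  ∀ j : Fin u.length, x (i + (j : ℕ)) = u.get j

/-- The finite word `u` occurs (somewhere) in the sequence `x`. -/
def OccursIn (u : List A) (x : ℤ → A) : Prop := ∃ i : ℤ, OccursAt u x i

/-- The language `L(X)` of a subshift `X` : all finite words occurring in some
element of `X`. -/
def lang (X : Set (ℤ → A)) : Set (List A) := {u | ∃ x ∈ X, OccursIn u x}

/-- The language `L(x)` of a sequence `x` : all finite words occurring in `x`. -/
def langSeq (x : ℤ → A) : Set (List A) := {u | OccursIn u x}

/-- The number of occurrences of `u` as a factor of the finite word `v`. -/
noncomputable def occCount (u v : List A) : ℕ :=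
  {i : ℕ | u <+: v.drop i ∧ i + u.length ≤ v.length}.ncard

/-- `w` is a return word to `u` (for the language `L`) : `wu ∈ L`, `u` is a prefix of
`wu` and `u` has exactly two occurrences in `wu`. -/
def IsReturnWord (L : Set (List A)) (u w : List A) : Prop :=
  (w ++ u) ∈ L ∧ u <+: (w ++ u) ∧ occCount u (w ++ u) = 2

/-- `x` is uniformly recurrent: every word of `L(x)` occurs in `x` with bounded
gaps. -/
def UniformlyRecurrent (x : ℤ → A) : Prop :=
  ∀ u ∈ langSeq x, ∃ N : ℕ, ∀ i : ℤ, ∃ j : ℤ, i ≤ j ∧ j < i + N ∧ OccursAt u x j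

/-- `x` is linearly recurrent with constant `K` : it is uniformly recurrent and every
return word `w` to a word `u ∈ L(x)` satisfies `|w| ≤ K⬝|u|`. -/
def LinearlyRecurrentSeq (K : ℝ) (x : ℤ → A) : Prop :=
  UniformlyRecurrent x ∧
    ∀ u ∈ langSeq x, ∀ w : List A,
      IsReturnWord (langSeq x) u w → (w.length : ℝ) ≤ K * u.length

/-- A subshift: a closed shift-invariant subset of `A^ℤ`. -/
def IsSubshift [TopologicalSpace A] (X : Set (ℤ → A)) : Prop :=
  IsClosed X ∧ shiftZ '' X = X

/-- A minimal subshift: a nonempty subshift with no nonempty proper closed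
shift-invariant subset. -/
def IsMinimalSubshift [TopologicalSpace A] (X : Set (ℤ → A)) : Prop :=
  IsSubshift X ∧ X.Nonempty ∧
    ∀ Y ⊆ X, IsClosed Y → shiftZ '' Y = Y → Y = ∅ ∨ Y = X

/-- A linearly recurrent (LR) subshift with constant `K` : a minimal subshift
containing a linearly recurrent sequence with constant `K`. -/
def IsLRSubshift [TopologicalSpace A] (K : ℝ) (X : Set (ℤ → A)) : Prop :=
  IsMinimalSubshift X ∧ ∃ x ∈ X, LinearlyRecurrentSeq K x

/-- The subshift `X` is aperiodic: it contains no periodic point. -/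
def AperiodicSubshift (X : Set (ℤ → A)) : Prop :=
  ∀ x ∈ X, ∀ n : ℕ, 0 < n → shiftZ^[n] x ≠ x

/-- The fractional power `u^β` : the prefix of length `⌊|u|⬝β⌋` of `uuu⋯`. -/
noncomputable def fracPow (u : List A) (β : ℝ) : List A :=
  (List.flatten (List.replicate (⌈β⌉₊ + 1) u)).take ⌊(u.length : ℝ) * β⌋₊

/-- The Poincaré recurrence of a set `U` : `τ(U) = inf {k ≥ 1 : S^k U ∩ U ≠ ∅}`
(`∞` if no such `k` exists). -/
noncomputable def recOfSet {X : Type*} (T : X → X) (U : Set X) : ℝ≥0∞ :=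
  sInf {t : ℝ≥0∞ | ∃ k : ℕ, 1 ≤ k ∧ (T^[k] '' U ∩ U).Nonempty ∧ t = k}

/-- The atom `ζ_n(x)` of the refined partition `ζ ∨ S⁻¹ζ ∨ ⋯ ∨ S^{-n+1}ζ` of the
subshift `X`, where `ζ` is the partition into `1`-cylinders: it is the cylinder
`[x_0 x_1 ⋯ x_{n-1}]` (inside `X`). -/
def cylAtom {A : Type*} (X : Set (ℤ → A)) (n : ℕ) (x : ℤ → A) : Set (ℤ → A) :=
  {y ∈ X | ∀ k : ℕ, k < n → y (k : ℤ) = x (k : ℤ)}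

/-- The lower local rate of Poincaré recurrence `R̲_ζ(x) = liminf_n τ(ζ_n(x))/n`
for the partition of the subshift `X` into `1`-cylinders. -/
noncomputable def lowerRateCyl {A : Type*} (X : Set (ℤ → A)) (x : ℤ → A) : ℝ≥0∞ :=
  atTop.liminf fun n : ℕ => recOfSet shiftZ (cylAtom X n x) / (n : ℝ≥0∞)

/-- The upper local rate of Poincaré recurrence `R̄_ζ(x) = limsup_n τ(ζ_n(x))/n`
for the partition of the subshift `X` into `1`-cylinders. -/
noncomputable def upperRateCyl {A : Type*} (X : Set (ℤ → A)) (x : ℤ → A) : ℝ≥0∞ :=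
  atTop.limsup fun n : ℕ => recOfSet shiftZ (cylAtom X n x) / (n : ℝ≥0∞)


lemma shiftZ_iterate {A : Type*} (k : ℕ) (x : ℤ → A) (m : ℤ) :
    (shiftZ^[k] x) m = x (m + k) := by
  induction k generalizing x m with
  | zero => simp
  | succ k ih =>
    rw [Function.iterate_succ_apply, ih]
    show x (m + ↑k + 1) = _
    congr 1
    push_cast; ring

lemma flatten_replicate_get {A : Type*} (u : List A) (hk : 0 < u.length) :
    ∀ (m i : ℕ) (hi : i < m * u.length),
      ((List.replicate m u).flatten)[i]'(by simpa using hi)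
        = u[i % u.length]'(Nat.mod_lt _ hk) := by
  intro m
  induction m with
  | zero => intro i hi; omega
  | succ m ih =>
    intro i hi
    simp only [List.replicate_succ, List.flatten_cons]
    by_cases h : i < u.length
    · rw [List.getElem_append_left h]
      congr 1
      exact (Nat.mod_eq_of_lt h).symm
    · push_neg at h
      rw [List.getElem_append_right h]
      have h2 : i - u.length < m * u.length := by
        have := hi; rw [Nat.succ_mul] at this; omega
      rw [ih (i - u.length) h2]
      congr 1
      conv_rhs => rw [show i = (i - u.length) + u.length by omega]
      rw [Nat.add_mod_right]

/-- If a subshift `X` is `(K+1)`-power free for some real `K > 0`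
(the only word `u` with `u^{K+1} ∈ L(X)` is the empty word), then for the partition
`ζ` into `1`-cylinders, `R̲_ζ(x) ≥ 1/K` for every `x ∈ X`. -/
theorem stmt13 {A : Type*} [Fintype A] [TopologicalSpace A] [DiscreteTopology A]
    (X : Set (ℤ → A)) (hX : IsSubshift X) (K : ℝ) (hK : 0 < K)
    (hpf : ∀ u : List A, fracPow u (K + 1) ∈ lang X → u = []) :
    ∀ x ∈ X, ENNReal.ofReal (1 / K) ≤ lowerRateCyl X x := by
  intro x hx
  have key : ∀ n k : ℕ, 1 ≤ k →
      ((shiftZ^[k] '' (cylAtom X n x)) ∩ cylAtom X n x).Nonempty →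
      (n : ℝ) < k * K := by
    rintro n k hk1 ⟨z, ⟨y, hyU, hzy⟩, hzU⟩
    have hyX : y ∈ X := hyU.1
    have hy : ∀ m : ℕ, m < n → y (m : ℤ) = x (m : ℤ) := hyU.2
    have hz : ∀ m : ℕ, m < n → y ((m : ℤ) + k) = x (m : ℤ) := by
      intro m hm
      have h1 := hzU.2 m hm
      rw [← hzy] at h1
      rwa [shiftZ_iterate] at h1
    have hper : ∀ i : ℕ, i < n + k → y (i : ℤ) = y ((i % k : ℕ) : ℤ) := by
      intro i
      induction i using Nat.strong_induction_on with
      | _ i IH =>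
        intro hi
        by_cases h : i < k
        · rw [Nat.mod_eq_of_lt h]
        · push_neg at h
          have h1 : i - k < n := by omega
          have e1 : y (i : ℤ) = x ((i - k : ℕ) : ℤ) := by
            have := hz (i - k) h1
            rwa [show ((i - k : ℕ) : ℤ) + k = (i : ℤ) by push_cast; omega] at this
          have e2 : y (i : ℤ) = y ((i - k : ℕ) : ℤ) := by
            rw [e1, ← hy (i - k) h1]
          have hIH : y (((i - k : ℕ)) : ℤ) = y ((((i - k) % k : ℕ)) : ℤ) :=
            IH (i - k) (by omega) (lt_of_lt_of_le h1 (Nat.le_add_right n k))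
          have hmod : (i - k) % k = i % k := by
            conv_rhs => rw [show i = (i - k) + k by omega]
            rw [Nat.add_mod_right]
          rw [e2, hIH, hmod]
    set u : List A := List.ofFn (fun j : Fin k => y ((j : ℕ) : ℤ)) with hu
    have hul : u.length = k := by simp [hu]
    by_contra hcon
    push_neg at hcon
    -- then ⌊k(K+1)⌋ ≤ n + k
    have hfl : ⌊(k : ℝ) * (K + 1)⌋₊ ≤ n + k := by
      have h1 : (k : ℝ) * (K + 1) ≤ (n : ℝ) + k := by nlinarith
      calc ⌊(k : ℝ) * (K + 1)⌋₊ ≤ ⌊((n + k : ℕ) : ℝ)⌋₊ :=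
            Nat.floor_le_floor (by push_cast; linarith)
        _ = n + k := Nat.floor_natCast _
    -- length of fracPow
    have hK1 : (0 : ℝ) ≤ K + 1 := by linarith
    set len := ⌊(u.length : ℝ) * (K + 1)⌋₊ with hlen
    have hlen2 : len ≤ (⌈K + 1⌉₊ + 1) * k := by
      have h1 : (k : ℝ) * (K + 1) ≤ ((⌈K + 1⌉₊ + 1) * k : ℕ) := by
        push_cast
        have := Nat.le_ceil (K + 1)
        nlinarith
      calc len ≤ ⌊(((⌈K + 1⌉₊ + 1) * k : ℕ) : ℝ)⌋₊ := by
            rw [hlen, hul]; exact Nat.floor_le_floor h1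
        _ = _ := Nat.floor_natCast _
    have hflat : ((List.replicate (⌈K + 1⌉₊ + 1) u).flatten).length
        = (⌈K + 1⌉₊ + 1) * k := by simp [hul]
    have hfp : (fracPow u (K + 1)).length = len := by
      rw [fracPow, List.length_take, hflat]
      exact min_eq_left hlen2
    have hocc : OccursAt (fracPow u (K + 1)) y 0 := by
      intro j
      have hj : (j : ℕ) < len := by rw [← hfp]; exact j.2
      have hjnk : (j : ℕ) < n + k := lt_of_lt_of_le hj (by rw [hlen, hul]; exact hfl)
      have hjflat : (j : ℕ) < (⌈K + 1⌉₊ + 1) * k := lt_of_lt_of_le hj hlen2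
      have hget : (fracPow u (K + 1)).get j = u[(j : ℕ) % k]'(by rw [hul]; exact Nat.mod_lt _ hk1) := by
        rw [List.get_eq_getElem]
        have : (fracPow u (K + 1))[(j : ℕ)]'(j.2)
            = ((List.replicate (⌈K + 1⌉₊ + 1) u).flatten)[(j : ℕ)]'(by rw [hflat]; exact hjflat) := by
          simp [fracPow]
        rw [this]
        have := flatten_replicate_get u (by rw [hul]; exact hk1) (⌈K + 1⌉₊ + 1) (j : ℕ)
          (by rw [hul]; exact hjflat)
        convert this using 3 <;> rw [hul]
      rw [hget]
      have : u[(j : ℕ) % k]'(by rw [hul]; exact Nat.mod_lt _ hk1)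
          = y (((j : ℕ) % k : ℕ) : ℤ) := by
        simp [hu]
      rw [this, zero_add]
      exact hper (j : ℕ) hjnk
    have hlang : fracPow u (K + 1) ∈ lang X := ⟨y, hyX, 0, hocc⟩
    have := hpf u hlang
    rw [this] at hul
    simp at hul
    omega
  have hrec : ∀ n : ℕ,
      ENNReal.ofReal (1 / K) ≤ recOfSet shiftZ (cylAtom X n x) / (n : ℝ≥0∞) := by
    intro n
    have hrec1 : (1 : ℝ≥0∞) ≤ recOfSet shiftZ (cylAtom X n x) := by
      apply le_sInf
      rintro t ⟨k, hk1, -, rfl⟩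
      exact_mod_cast hk1
    rcases Nat.eq_zero_or_pos n with h0 | hn
    · subst h0
      rw [Nat.cast_zero, ENNReal.div_zero (by intro h; rw [h] at hrec1; simp at hrec1)]
      exact le_top
    · rw [ENNReal.le_div_iff_mul_le (Or.inl (by exact_mod_cast hn.ne'))
        (Or.inl (ENNReal.natCast_ne_top n))]
      apply le_sInf
      rintro t ⟨k, hk1, hne, rfl⟩
      have hnk := key n k hk1 hne
      have e1 : ENNReal.ofReal (1 / K) * (n : ℝ≥0∞) = ENNReal.ofReal ((n : ℝ) / K) := by
        rw [← ENNReal.ofReal_natCast n, ← ENNReal.ofReal_mul (by positivity)]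
        ring_nf
      rw [e1, ← ENNReal.ofReal_natCast k]
      apply ENNReal.ofReal_le_ofReal
      rw [div_le_iff₀ hK]
      nlinarith
  exact le_liminf_of_le (by isBoundedDefault) (Eventually.of_forall hrec)
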